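/- arXiv:1301.2782 — 2 statements merged into one kernel-verified Lean document; each statement's English description precedes it below -/
import Mathlib

section
/- The map g̃ : Δ̊ → ℝⁿ defined by g̃(x) = x − (1/2)∑ᵢ log(κᵢ − ⟨x, ηᵢ⟩) ηᵢ is injective, where Δ̊ = {x ∈ ℝⁿ : ⟨x, ηᵢ⟩ < κᵢ for all i}. -/
open scoped RealInnerProductSpace

/-- The map `g̃(x) = x − ½∑ᵢ log(κᵢ − ⟨x,ηᵢ⟩) ηᵢ` is injective on the interior
`Δ̊ = {x | ⟨x,ηᵢ⟩ < κᵢ for all i}`. -/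
theorem gtilde_injective (n N : ℕ) (η : Fin N → EuclideanSpace ℝ (Fin n)) (κ : Fin N → ℝ)
    (hne : {x : EuclideanSpace ℝ (Fin n) | ∀ i, ⟪x, η i⟫ < κ i}.Nonempty) :
    Set.InjOn
      (fun x => x - (1/2 : ℝ) • ∑ i, Real.log (κ i - ⟪x, η i⟫) • η i)
      {x : EuclideanSpace ℝ (Fin n) | ∀ i, ⟪x, η i⟫ < κ i} := by
  intro x hx y hy h
  simp only at h
  have key : x - y = (1/2 : ℝ) •
      ∑ i, (Real.log (κ i - ⟪x, η i⟫) - Real.log (κ i - ⟪y, η i⟫)) • η i := by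
    have h' : x - (1/2 : ℝ) • ∑ i, Real.log (κ i - ⟪x, η i⟫) • η i
        = y - (1/2 : ℝ) • ∑ i, Real.log (κ i - ⟪y, η i⟫) • η i := h
    have : x - y = (1/2 : ℝ) • ∑ i, Real.log (κ i - ⟪x, η i⟫) • η i
        - (1/2 : ℝ) • ∑ i, Real.log (κ i - ⟪y, η i⟫) • η i := by
      rw [sub_eq_sub_iff_sub_eq_sub] at h'
      exact h'
    rw [this, ← smul_sub, ← Finset.sum_sub_distrib]
    congr 1
    apply Finset.sum_congr rfl
    intro i _
    rw [sub_smul]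
  have hterm : ∀ i : Fin N,
      (Real.log (κ i - ⟪x, η i⟫) - Real.log (κ i - ⟪y, η i⟫)) * ⟪x - y, η i⟫ ≤ 0 := by
    intro i
    have ha : (0:ℝ) < κ i - ⟪x, η i⟫ := sub_pos.mpr (hx i)
    have hb : (0:ℝ) < κ i - ⟪y, η i⟫ := sub_pos.mpr (hy i)
    have hi : ⟪x - y, η i⟫ = (κ i - ⟪y, η i⟫) - (κ i - ⟪x, η i⟫) := by
      rw [inner_sub_left]; ring
    rw [hi]
    set a := κ i - ⟪x, η i⟫
    set b := κ i - ⟪y, η i⟫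
    rcases le_total a b with hab | hab
    · have hlog : Real.log a ≤ Real.log b := Real.log_le_log ha hab
      nlinarith
    · have hlog : Real.log b ≤ Real.log a := Real.log_le_log hb hab
      nlinarith
  have hle : ⟪x - y, x - y⟫ ≤ 0 := by
    nth_rewrite 2 [key]
    rw [real_inner_smul_right, inner_sum]
    have : ∑ i, ⟪x - y, (Real.log (κ i - ⟪x, η i⟫) - Real.log (κ i - ⟪y, η i⟫)) • η i⟫
        ≤ 0 := by
      apply Finset.sum_nonpos
      intro i _
      rw [real_inner_smul_right]
      have := hterm i
      linarith [hterm i]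
    nlinarith
  have hz : x - y = 0 := by
    have h0 : ⟪x - y, x - y⟫ = 0 := le_antisymm hle real_inner_self_nonneg
    exact inner_self_eq_zero.mp h0
  exact sub_eq_zero.mp hz
end

section
/- The map g̃ : Δ̊ → ℝⁿ, g̃(x) = x − (1/2)∑ᵢ log(κᵢ − ⟨x, ηᵢ⟩) ηᵢ, is surjective onto ℝⁿ. -/
/-!
Up to the factor `2`, `gtilde η κ - y` is the gradient of the potential
`‖z - y‖² + ∑ᵢ φ(κᵢ - ⟪z, ηᵢ⟫)` with `φ = logPrimitive`, `φ t = t log t - t`. Since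
`φ ≥ -1` on `[0, ∞)`, the potential is coercive on the closed polyhedron
`{z | ∀ i, ⟪z, ηᵢ⟫ ≤ κᵢ}` and attains its minimum there. At a boundary point some
`κᵢ - ⟪z, ηᵢ⟫` vanishes, and since `φ' = log → -∞` at `0⁺`, a step of size `s` towards an
interior point changes that term by order `s log s`, while the remaining, convex terms change
by order `s`. So for small `s` the potential drops: the minimizer is interior, hence a
critical point, i.e. a preimage of `y`.
-/

open scoped RealInnerProductSpace
open Real Set Filter Topology

noncomputable def logPrimitive (t : ℝ) : ℝ := t * log t - t

@[simp] lemma logPrimitive_zero : logPrimitive 0 = 0 := by simp [logPrimitive]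

lemma continuous_logPrimitive : Continuous logPrimitive := continuous_mul_log.sub continuous_id

lemma hasDerivAt_logPrimitive {t : ℝ} (ht : t ≠ 0) : HasDerivAt logPrimitive (log t) t :=
  ((hasDerivAt_mul_log ht).sub (hasDerivAt_id t)).congr_deriv (add_sub_cancel_right _ _)

lemma convexOn_logPrimitive : ConvexOn ℝ (Ici 0) logPrimitive :=
  convexOn_mul_log.sub (concaveOn_id (convex_Ici 0))

lemma neg_one_le_logPrimitive {t : ℝ} (ht : 0 ≤ t) : -1 ≤ logPrimitive t := by
  rcases ht.eq_or_lt with rfl | ht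
  · simp
  · have := mul_le_mul_of_nonneg_left (one_sub_inv_le_log_of_pos ht) ht.le
    rw [mul_sub, mul_inv_cancel₀ ht.ne'] at this
    unfold logPrimitive
    linarith

lemma logPrimitive_mul (s t : ℝ) : logPrimitive (s * t) = s * logPrimitive t + s * t * log s := by
  rcases eq_or_ne s 0 with rfl | hs
  · simp
  rcases eq_or_ne t 0 with rfl | ht
  · simp
  simp only [logPrimitive, log_mul hs ht]
  ring

lemma sum_logPrimitive_segment_le {ι : Type*} [Fintype ι] {α β : ι → ℝ} (hα : ∀ i, 0 ≤ α i)
    (hβ : ∀ i, 0 ≤ β i) {i₀ : ι} (hi₀ : α i₀ = 0) {s : ℝ} (hs₀ : 0 ≤ s) (hs₁ : s ≤ 1) :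
    ∑ i, logPrimitive ((1 - s) * α i + s * β i) ≤
      (1 - s) * ∑ i, logPrimitive (α i) + s * ∑ i, logPrimitive (β i) + s * β i₀ * log s := by
  classical
  have hterm : ∀ i, logPrimitive ((1 - s) * α i + s * β i) ≤
      (1 - s) * logPrimitive (α i) + s * logPrimitive (β i) +
        if i = i₀ then s * β i₀ * log s else 0 := by
    intro i
    split_ifs with h
    · subst h
      simp [hi₀, logPrimitive_mul]
    · simpa using convexOn_logPrimitive.2 (hα i) (hβ i) (sub_nonneg.2 hs₁) hs₀ (by ring)
  refine (Finset.sum_le_sum fun i _ => hterm i).trans_eq ?_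
  simp [Finset.sum_add_distrib, Finset.mul_sum]

section Potential

variable {E : Type*} [NormedAddCommGroup E] [InnerProductSpace ℝ E] {ι : Type*}
  (η : ι → E) (κ : ι → ℝ) (y : E)

def polyhedron : Set E := {z | ∀ i, ⟪z, η i⟫ ≤ κ i}

lemma isClosed_polyhedron : IsClosed (polyhedron η κ) := by
  simp only [polyhedron, ofPred_forall]
  exact isClosed_iInter fun i => isClosed_le (by fun_prop) continuous_const

lemma convex_polyhedron : Convex ℝ (polyhedron η κ) := by
  simp only [polyhedron, ofPred_forall]
  exact convex_iInter fun i => convex_halfSpace_le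
    (isBoundedBilinearMap_inner.isBoundedLinearMap_left (η i)).toIsLinearMap (κ i)

variable [Fintype ι]

noncomputable def gtilde (x : E) : E := x - (1/2 : ℝ) • ∑ i, log (κ i - ⟪x, η i⟫) • η i

noncomputable def potential (z : E) : ℝ :=
  ‖z - y‖ ^ 2 + ∑ i, logPrimitive (κ i - ⟪z, η i⟫)

lemma isOpen_setOf_forall_inner_lt : IsOpen {z : E | ∀ i, ⟪z, η i⟫ < κ i} := by
  simp only [ofPred_forall]
  exact isOpen_iInter_of_finite fun i => isOpen_lt (by fun_prop) continuous_const

lemma continuous_potential : Continuous (potential η κ y) := by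
  unfold potential
  have := continuous_logPrimitive
  fun_prop

lemma hasFDerivAt_potential {x : E} (hx : ∀ i, ⟪x, η i⟫ < κ i) :
    HasFDerivAt (potential η κ y) (innerSL ℝ ((2 : ℝ) • (gtilde η κ x - y))) x := by
  have hterm : ∀ i, HasFDerivAt (fun z => logPrimitive (κ i - ⟪z, η i⟫))
      (log (κ i - ⟪x, η i⟫) • -innerSL ℝ (η i)) x := by
    intro i
    have hlin : HasFDerivAt (fun z => κ i - ⟪z, η i⟫) (-innerSL ℝ (η i)) x :=
      ((innerSL ℝ (η i)).hasFDerivAt.const_sub (κ i)).congr_of_eventuallyEq <|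
        .of_forall fun z => by simp only [innerSL_apply_apply, real_inner_comm]
    exact (hasDerivAt_logPrimitive (sub_pos.2 (hx i)).ne').comp_hasFDerivAt x hlin
  refine (((hasFDerivAt_id x).sub_const y).norm_sq.add
    (HasFDerivAt.fun_sum fun i _ => hterm i)).congr_fderiv ?_
  ext w
  simp only [add_apply, smul_apply, sum_apply, neg_apply, sub_apply, ContinuousLinearMap.comp_id,
    id_eq, coe_innerSL_apply, map_sub, map_smul, map_sum, smul_neg, Finset.sum_neg_distrib,
    real_inner_comm w, gtilde, nsmul_eq_mul, smul_eq_mul]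
  ring

lemma sq_norm_sub_le_potential {z : E} (hz : z ∈ polyhedron η κ) :
    ‖z - y‖ ^ 2 - Fintype.card ι ≤ potential η κ y z := by
  have := Finset.sum_le_sum fun i (_ : i ∈ Finset.univ) =>
    neg_one_le_logPrimitive (sub_nonneg.2 (hz i))
  simp only [Finset.sum_neg_distrib, Finset.sum_const, Finset.card_univ, nsmul_eq_mul,
    mul_one] at this
  unfold potential
  linarith

lemma exists_isMinOn_potential [ProperSpace E] (hne : (polyhedron η κ).Nonempty) :
    ∃ a ∈ polyhedron η κ, IsMinOn (potential η κ y) (polyhedron η κ) a := by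
  obtain ⟨x₀, hx₀⟩ := hne
  refine (continuous_potential η κ y).continuousOn.exists_isMinOn' (isClosed_polyhedron η κ) hx₀ ?_
  have hnorm : Tendsto (fun z => ‖z - y‖) (cocompact E) atTop :=
    tendsto_atTop_mono (fun z => norm_sub_norm_le z y)
      (tendsto_atTop_add_const_right _ _ tendsto_norm_cocompact_atTop)
  have hbound : Tendsto (fun z => ‖z - y‖ ^ 2 - Fintype.card ι) (cocompact E) atTop :=
    tendsto_atTop_add_const_right _ _ ((tendsto_pow_atTop two_ne_zero).comp hnorm)
  rw [eventually_inf_principal]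
  filter_upwards [hbound.eventually_ge_atTop (potential η κ y x₀)] with z hz hzC
  exact hz.trans (sq_norm_sub_le_potential η κ y hzC)

lemma potential_segment_le {a b : E} (ha : a ∈ polyhedron η κ) (hb : b ∈ polyhedron η κ) {i₀ : ι}
    (hi₀ : ⟪a, η i₀⟫ = κ i₀) {s : ℝ} (hs₀ : 0 ≤ s) (hs₁ : s ≤ 1) :
    potential η κ y ((1 - s) • a + s • b) ≤ (1 - s) * potential η κ y a + s * potential η κ y b +
      s * (κ i₀ - ⟪b, η i₀⟫) * log s := by
  have hquad : ‖(1 - s) • a + s • b - y‖ ^ 2 ≤ (1 - s) * ‖a - y‖ ^ 2 + s * ‖b - y‖ ^ 2 := by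
    have := ((convexOn_norm convex_univ).pow (fun _ _ => norm_nonneg _) 2).2 (mem_univ (a - y))
      (mem_univ (b - y)) (sub_nonneg.2 hs₁) hs₀ (by ring)
    rw [show (1 - s) • a + s • b - y = (1 - s) • (a - y) + s • (b - y) by module]
    simpa using this
  have hsum := sum_logPrimitive_segment_le (α := fun i => κ i - ⟪a, η i⟫)
    (β := fun i => κ i - ⟪b, η i⟫) (fun i => sub_nonneg.2 (ha i)) (fun i => sub_nonneg.2 (hb i))
    (sub_eq_zero.2 hi₀.symm) hs₀ hs₁
  have hinner : ∀ i, κ i - ⟪(1 - s) • a + s • b, η i⟫ =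
      (1 - s) * (κ i - ⟪a, η i⟫) + s * (κ i - ⟪b, η i⟫) := fun i => by
    simp only [inner_add_left, real_inner_smul_left]
    ring
  simp only [potential, hinner]
  linarith

lemma forall_inner_lt_of_isMinOn_potential {x₀ a : E} (hx₀ : ∀ i, ⟪x₀, η i⟫ < κ i)
    (ha : a ∈ polyhedron η κ) (hmin : IsMinOn (potential η κ y) (polyhedron η κ) a) :
    ∀ i, ⟪a, η i⟫ < κ i := by
  by_contra! ⟨i₀, hi₀⟩
  set P := potential η κ y
  set β := κ i₀ - ⟪x₀, η i₀⟫
  have hβ : 0 < β := sub_pos.2 (hx₀ i₀)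
  obtain ⟨s, ⟨hs₀, hs₁⟩, hlog⟩ := (Filter.Eventually.and (Ioc_mem_nhdsGT one_pos)
    (tendsto_log_nhdsGT_zero.eventually_lt_atBot ((P a - P x₀) / β))).exists
  have hx₀' : x₀ ∈ polyhedron η κ := fun i => (hx₀ i).le
  have hseg := potential_segment_le η κ y ha hx₀' (le_antisymm (ha i₀) hi₀) hs₀.le hs₁
  have hle : P a ≤ P ((1 - s) • a + s • x₀) :=
    hmin (convex_polyhedron η κ ha hx₀' (sub_nonneg.2 hs₁) hs₀.le (by ring))
  have := mul_pos hs₀ (sub_pos.2 ((lt_div_iff₀' hβ).1 hlog))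
  linarith

lemma gtilde_eq_of_isLocalMin {x : E} (hx : ∀ i, ⟪x, η i⟫ < κ i)
    (hmin : IsLocalMin (potential η κ y) x) : gtilde η κ x = y := by
  have h := congr($(hmin.hasFDerivAt_eq_zero (hasFDerivAt_potential η κ y hx)) (gtilde η κ x - y))
  simpa only [innerSL_apply_apply, zero_apply, real_inner_smul_left,
    mul_eq_zero, two_ne_zero, false_or, inner_self_eq_zero, sub_eq_zero] using h

end Potential

/-- The map `g̃(x) = x − ½∑ᵢ log(κᵢ − ⟨x,ηᵢ⟩) ηᵢ` maps the interior
`Δ̊ = {x | ⟨x,ηᵢ⟩ < κᵢ for all i}` onto all of `ℝⁿ`. -/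
theorem gtilde_surjective (n N : ℕ) (η : Fin N → EuclideanSpace ℝ (Fin n)) (κ : Fin N → ℝ)
    (hne : {x : EuclideanSpace ℝ (Fin n) | ∀ i, ⟪x, η i⟫ < κ i}.Nonempty)
    (y : EuclideanSpace ℝ (Fin n)) :
    ∃ x, (∀ i, ⟪x, η i⟫ < κ i) ∧
      x - (1/2 : ℝ) • ∑ i, Real.log (κ i - ⟪x, η i⟫) • η i = y := by
  obtain ⟨x₀, hx₀⟩ := hne
  obtain ⟨a, ha, hmin⟩ := exists_isMinOn_potential η κ y ⟨x₀, fun i => (hx₀ i).le⟩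
  have ha' := forall_inner_lt_of_isMinOn_potential η κ y hx₀ ha hmin
  have hloc : IsLocalMin (potential η κ y) a := hmin.isLocalMin <|
    mem_of_superset ((isOpen_setOf_forall_inner_lt η κ).mem_nhds ha') fun z hz i => (hz i).le
  exact ⟨a, ha', gtilde_eq_of_isLocalMin η κ y ha' hloc⟩
end
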